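/- arXiv:2001.10100 — 2 statements merged into one kernel-verified Lean document; each statement's English description precedes it below -/
import Mathlib

section
/- Let H be a real inner product space, let u, w, u_prev ∈ H, let β, γ ≥ 0, and let B : H × H → ℝ be a symmetric positive semidefinite bilinear form. Suppose that (u, v) + (β+γ)B(u,v) = (w,v) + β B(u_prev, v) for all v ∈ H. Then ||w||^2 = ||u||^2 + ||w - u||^2 + 2γ B(u,u) + β ( B(u,u) - B(u_prev,u_prev) + B(u - u_prev, u - u_prev) ). -/
/-- Relation between Step 1 and Step 2 solutions of the modular grad-div method
(abstract form): if `(u,v) + (β+γ)B(u,v) = (w,v) + βB(u_prev,v)` for all `v`, with `B`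
a symmetric positive semidefinite bilinear form, then
`‖w‖² = ‖u‖² + ‖w−u‖² + 2γB(u,u) + β(B(u,u) − B(u_prev,u_prev) + B(u−u_prev,u−u_prev))`. -/
theorem modular_graddiv_step_relation {H : Type*} [NormedAddCommGroup H]
    [InnerProductSpace ℝ H] (B : H →ₗ[ℝ] H →ₗ[ℝ] ℝ)
    (hsymm : ∀ x y, B x y = B y x) (hpsd : ∀ x, 0 ≤ B x x)
    (β γ : ℝ) (hβ : 0 ≤ β) (hγ : 0 ≤ γ) (u u_prev w : H)
    (h : ∀ v : H, (inner ℝ u v : ℝ) + (β + γ) * B u v = (inner ℝ w v : ℝ) + β * B u_prev v) :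
    ‖w‖ ^ 2 = ‖u‖ ^ 2 + ‖w - u‖ ^ 2 + 2 * γ * B u u +
      β * (B u u - B u_prev u_prev + B (u - u_prev) (u - u_prev)) := by
  have hu := h u
  have e1 : B (u - u_prev) (u - u_prev)
      = B u u - B u_prev u - B u u_prev + B u_prev u_prev := by
    simp [map_sub, LinearMap.sub_apply]; ring
  have hs := hsymm u_prev u
  have hn : ‖w - u‖ ^ 2 = ‖w‖ ^ 2 - 2 * (inner ℝ w u : ℝ) + ‖u‖ ^ 2 :=
    norm_sub_sq_real w u
  have hself : (inner ℝ u u : ℝ) = ‖u‖ ^ 2 := real_inner_self_eq_norm_sq u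
  linear_combination -2*hu - β*e1 - β*hs - hn + 2*hself
end

section
/- Error identity for the grad-div post-processing step: let H be a real inner product space, B a symmetric positive semidefinite bilinear form on a subspace, β, γ, Δt ≥ 0, and suppose e, e_prev, ẽ ∈ H satisfy (e, v) + βB(e − e_prev, v) + γΔt B(e, v) = (ẽ, v) for all test functions v. Decompose e = η − φ, ẽ = η̃ − Λ with (η, φ) = 0. Then ||Λ||² ≥ ||φ||² + ||Λ − φ||² + β(B(φ,φ) − B(φ_prev, φ_prev)) + (β/2)B(φ − φ_prev, φ − φ_prev) + γΔt B(φ,φ) − βΔt B(φ_prev, φ_prev) − β(1+2Δt)S − γΔt B(η,η), where S bounds the interpolation-error increment term B(η − η_prev, η − η_prev)/Δt (i.e., S ≥ ||∇η_t||² over the time interval). -/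
lemma psd_young {H : Type*} [AddCommGroup H] [Module ℝ H]
    (B : H →ₗ[ℝ] H →ₗ[ℝ] ℝ) (hsymm : ∀ x y, B x y = B y x) (hpsd : ∀ x, 0 ≤ B x x)
    (x y : H) (t : ℝ) (ht : 0 < t) :
    2 * B x y ≤ t * B x x + (1 / t) * B y y := by
  have h := hpsd (Real.sqrt t • x - (Real.sqrt t)⁻¹ • y)
  have hst : 0 < Real.sqrt t := Real.sqrt_pos.2 ht
  have hsq : Real.sqrt t * Real.sqrt t = t := Real.mul_self_sqrt ht.le
  simp only [map_sub, map_smul, LinearMap.sub_apply, LinearMap.smul_apply, smul_eq_mul] at h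
  have hxy := hsymm y x
  have hinv : (Real.sqrt t)⁻¹ * (Real.sqrt t)⁻¹ = 1 / t := by
    rw [← mul_inv, hsq]; exact (one_div t).symm
  have hone : Real.sqrt t * (Real.sqrt t)⁻¹ = 1 := mul_inv_cancel₀ hst.ne'
  have hrw : Real.sqrt t * (Real.sqrt t * B x x - (Real.sqrt t)⁻¹ * B y x) -
      (Real.sqrt t)⁻¹ * (Real.sqrt t * B x y - (Real.sqrt t)⁻¹ * B y y) =
      t * B x x - 2 * B x y + (1 / t) * B y y := by
    linear_combination B x x * hsq - (B y x + B x y) * hone + B y y * hinv - hxy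
  rw [hrw] at h
  linarith

/-- Error identity/inequality for the grad-div post-processing step (abstract form of the
lemma relating the finite element error `φ` of the Step 2 solution to the error `Λ` of the
Step 1 solution): with `B` a symmetric positive semidefinite bilinear form, error
decompositions `e = η − φ`, `e_prev = η_prev − φ_prev`, `ẽ = η − Λ` with `(η,φ) = 0`,
the update equation `(e,v) + βB(e − e_prev, v) + γΔt B(e,v) = (ẽ,v)` holding for all test
functions `v`, and `S` bounding the interpolation-error increment term,
`B(η − η_prev, η − η_prev) ≤ Δt·S`, one has
`‖Λ‖² ≥ ‖φ‖² + ‖Λ−φ‖² + β(B(φ,φ) − B(φ_prev,φ_prev)) + (β/2)B(φ−φ_prev,φ−φ_prev)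
  + γΔt B(φ,φ) − βΔt B(φ_prev,φ_prev) − β(1+2Δt)S − γΔt B(η,η)`. -/
theorem graddiv_step_error_bound {H : Type*} [NormedAddCommGroup H] [InnerProductSpace ℝ H]
    (B : H →ₗ[ℝ] H →ₗ[ℝ] ℝ)
    (hsymm : ∀ x y, B x y = B y x) (hpsd : ∀ x, 0 ≤ B x x)
    (β γ Δt S : ℝ) (hβ : 0 ≤ β) (hγ : 0 ≤ γ) (hΔt : 0 < Δt)
    (e e_prev et η η_prev φ φ_prev Λ : H)
    (hdec : e = η - φ) (hdec_prev : e_prev = η_prev - φ_prev) (hdec_t : et = η - Λ)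
    (horth : (inner ℝ η φ : ℝ) = 0)
    (heq : ∀ v : H, (inner ℝ e v : ℝ) + β * B (e - e_prev) v + γ * Δt * B e v =
      (inner ℝ et v : ℝ))
    (hS : B (η - η_prev) (η - η_prev) ≤ Δt * S) :
    ‖Λ‖ ^ 2 ≥ ‖φ‖ ^ 2 + ‖Λ - φ‖ ^ 2 + β * (B φ φ - B φ_prev φ_prev) +
      (β / 2) * B (φ - φ_prev) (φ - φ_prev) + γ * Δt * B φ φ -
      β * Δt * B φ_prev φ_prev - β * (1 + 2 * Δt) * S - γ * Δt * B η η := by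
  subst hdec hdec_prev hdec_t
  have key := heq φ
  simp only [inner_sub_left, horth, real_inner_self_eq_norm_sq] at key
  -- polarization: 2 B(φ-φp) φ = Bφφ - Bφpφp + B(φ-φp)(φ-φp)
  have hpol : 2 * B (φ - φ_prev) φ =
      B φ φ - B φ_prev φ_prev + B (φ - φ_prev) (φ - φ_prev) := by
    simp only [map_sub, LinearMap.sub_apply]
    linear_combination hsymm φ φ_prev
  -- splitting: B(η-ηp) φ = B(η-ηp)(φ-φp) + B(η-ηp) φp
  have hsplit : B (η - η_prev) φ =
      B (η - η_prev) (φ - φ_prev) + B (η - η_prev) φ_prev := by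
    simp only [map_sub, LinearMap.sub_apply]; ring
  -- rewrite key into a usable identity
  have keyB : B (η - φ - (η_prev - φ_prev)) φ = B (η - η_prev) φ - B (φ - φ_prev) φ := by
    simp only [map_sub, LinearMap.sub_apply]; ring
  have keyB2 : B (η - φ) φ = B η φ - B φ φ := by
    simp only [map_sub, LinearMap.sub_apply]
  rw [keyB, keyB2] at key
  have hnorm : ‖Λ - φ‖ ^ 2 = ‖Λ‖ ^ 2 - 2 * (inner ℝ Λ φ : ℝ) + ‖φ‖ ^ 2 :=
    norm_sub_sq_real Λ φ
  -- Young inequalities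
  have h1 := psd_young B hsymm hpsd (η - η_prev) (φ - φ_prev) 2 (by norm_num)
  have h2 := psd_young B hsymm hpsd (η - η_prev) φ_prev Δt⁻¹ (by positivity)
  rw [one_div, inv_inv] at h2
  have h3 := psd_young B hsymm hpsd η φ 1 (by norm_num)
  -- multiplied versions
  have hb1 := mul_le_mul_of_nonneg_left h1 hβ
  have hb2 := mul_le_mul_of_nonneg_left h2 hβ
  have hgd : 0 ≤ γ * Δt := mul_nonneg hγ hΔt.le
  have hg3 := mul_le_mul_of_nonneg_left h3 hgd
  have hbS := mul_le_mul_of_nonneg_left hS hβ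
  have hS2 : Δt⁻¹ * B (η - η_prev) (η - η_prev) ≤ S := (inv_mul_le_iff₀ hΔt).mpr hS
  have hbS2 := mul_le_mul_of_nonneg_left hS2 hβ
  -- multiplied identities
  have e1 : β * (2 * B (φ - φ_prev) φ) =
      β * (B φ φ - B φ_prev φ_prev + B (φ - φ_prev) (φ - φ_prev)) := by rw [hpol]
  have e2 : β * B (η - η_prev) φ =
      β * (B (η - η_prev) (φ - φ_prev) + B (η - η_prev) φ_prev) := by rw [hsplit]
  linarith [key, hnorm, hb1, hb2, hg3, hbS, hbS2, e1, e2]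
end
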